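/- If for some speed c ∈ ℝ the equation u_t = (D(u)u_x)_x + f(u) admits both a monotone nondecreasing traveling front profile connecting 0 (at ξ = −∞) to 1 (at ξ = +∞) and a monotone nonincreasing traveling front profile connecting 1 (at ξ = −∞) to 0 (at ξ = +∞), each a C¹ solution of (D(φ)φ')' + cφ' + f(φ) = 0 with 0 ≤ φ ≤ 1, D(φ)φ' → 0 at ±∞ and ∫_ℝ D(φ)φ'² dξ finite and positive, then necessarily c = 0. -/

import Mathlib

open MeasureTheory Filter Topology Asymptotics

noncomputable section

/-- Bistable (Nagumo) reaction-diffusion data: a degenerate diffusion coefficient `D`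
(`D(0)=0`, `D>0` on `(0,1]`, `D'>0` on `[0,1]`, `D` of class `C²`) and a bistable
reaction `f` of Nagumo type with zeros `0, α, 1`. -/
structure NagumoSetup : Type where
  D : ℝ → ℝ
  f : ℝ → ℝ
  α : ℝ
  hα : α ∈ Set.Ioo (0:ℝ) 1
  hD_C2 : ContDiff ℝ 2 D
  hD0 : D 0 = 0
  hD_pos : ∀ u ∈ Set.Ioc (0:ℝ) 1, 0 < D u
  hD'_pos : ∀ u ∈ Set.Icc (0:ℝ) 1, 0 < deriv D u
  hf_C2 : ContDiff ℝ 2 f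
  hf0 : f 0 = 0
  hfα : f α = 0
  hf1 : f 1 = 0
  hf'0 : deriv f 0 < 0
  hf'1 : deriv f 1 < 0
  hf'α : 0 < deriv f α
  hf_pos : ∀ u ∈ Set.Ioo α 1, 0 < f u
  hf_neg : ∀ u ∈ Set.Ioo (0:ℝ) α, f u < 0

/-- A `C¹` traveling-wave profile with speed `c` for `u_t = (D(u)u_x)_x + f(u)`:
it satisfies `(D(φ)φ')' + cφ' + f(φ) = 0` on `ℝ`, takes values in `[0,1]`,
the flux `D(φ)φ'` is differentiable and tends to `0` at `±∞`, and
`∫_ℝ D(φ)φ'² dξ` is finite. -/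
structure TWProfile (S : NagumoSetup) (φ : ℝ → ℝ) (c : ℝ) : Prop where
  hC1 : ContDiff ℝ 1 φ
  hrange : ∀ x, φ x ∈ Set.Icc (0:ℝ) 1
  hflux : Differentiable ℝ fun x => S.D (φ x) * deriv φ x
  hode : ∀ x, deriv (fun y => S.D (φ y) * deriv φ y) x + c * deriv φ x + S.f (φ x) = 0
  hflux_bot : Tendsto (fun x => S.D (φ x) * deriv φ x) atBot (𝓝 0)
  hflux_top : Tendsto (fun x => S.D (φ x) * deriv φ x) atTop (𝓝 0)
  hint : Integrable fun x => S.D (φ x) * (deriv φ x) ^ 2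

/-!
Multiplying the profile equation by the flux `ψ = D(φ)φ'` and writing `P` for a primitive of
`D f`, one gets `(ψ²/2 + P(φ))' = -c D(φ)φ'²`. Integrating over `ℝ`, with `ψ → 0` at `±∞`,
gives `-c ∫ D(φ)φ'² = P(φ(+∞)) - P(φ(-∞))`. The two fronts have opposite right-hand sides,
so `c` times the sum of their (positive) energies vanishes.
-/

namespace NagumoSetup

def potential (S : NagumoSetup) (u : ℝ) : ℝ := ∫ t in (0:ℝ)..u, S.D t * S.f t

theorem hasDerivAt_potential (S : NagumoSetup) (u : ℝ) :
    HasDerivAt S.potential (S.D u * S.f u) u := by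
  have hDf : Continuous fun u => S.D u * S.f u :=
    S.hD_C2.continuous.mul S.hf_C2.continuous
  exact intervalIntegral.integral_hasDerivAt_right (hDf.intervalIntegrable 0 u)
    (hDf.stronglyMeasurableAtFilter _ _) hDf.continuousAt

end NagumoSetup

namespace TWProfile

variable {S : NagumoSetup} {φ : ℝ → ℝ} {c : ℝ}

theorem hasDerivAt_flux (h : TWProfile S φ c) (x : ℝ) :
    HasDerivAt (fun y => S.D (φ y) * deriv φ y) (-(c * deriv φ x) - S.f (φ x)) x := by
  exact (h.hflux x).hasDerivAt.congr_deriv (by linarith [h.hode x])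

theorem hasDerivAt_energy (h : TWProfile S φ c) (x : ℝ) :
    HasDerivAt (fun y => (S.D (φ y) * deriv φ y) ^ 2 / 2 + S.potential (φ y))
      (-c * (S.D (φ x) * deriv φ x ^ 2)) x := by
  have hφ : HasDerivAt φ (deriv φ x) x :=
    (h.hC1.differentiable one_ne_zero x).hasDerivAt
  refine ((((h.hasDerivAt_flux x).pow 2).div_const 2).add
    ((S.hasDerivAt_potential (φ x)).comp x hφ)).congr_deriv ?_
  push_cast
  ring

theorem neg_mul_integral_eq_potential_sub {a b : ℝ} (h : TWProfile S φ c)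
    (hb : Tendsto φ atBot (𝓝 a)) (ht : Tendsto φ atTop (𝓝 b)) :
    -c * ∫ x, S.D (φ x) * deriv φ x ^ 2 = S.potential b - S.potential a := by
  have hlim : ∀ {l : Filter ℝ} {u : ℝ}, Tendsto (fun x => S.D (φ x) * deriv φ x) l (𝓝 0) →
      Tendsto φ l (𝓝 u) →
      Tendsto (fun y => (S.D (φ y) * deriv φ y) ^ 2 / 2 + S.potential (φ y)) l
        (𝓝 (S.potential u)) := fun hψ hφ => by
    simpa using ((hψ.pow 2).div_const 2).add
      ((S.hasDerivAt_potential _).continuousAt.tendsto.comp hφ)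
  rw [← integral_const_mul]
  exact integral_of_hasDerivAt_of_tendsto h.hasDerivAt_energy (h.hint.const_mul _)
    (hlim h.hflux_bot hb) (hlim h.hflux_top ht)

end TWProfile

theorem statement3_general (S : NagumoSetup) (c : ℝ) (φ₁ φ₂ : ℝ → ℝ)
    (h1 : TWProfile S φ₁ c)
    (h1b : Tendsto φ₁ atBot (𝓝 0)) (h1t : Tendsto φ₁ atTop (𝓝 1))
    (h1p : 0 < ∫ x, S.D (φ₁ x) * (deriv φ₁ x) ^ 2)
    (h2 : TWProfile S φ₂ c)
    (h2b : Tendsto φ₂ atBot (𝓝 1)) (h2t : Tendsto φ₂ atTop (𝓝 0))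
    (h2p : 0 < ∫ x, S.D (φ₂ x) * (deriv φ₂ x) ^ 2) :
    c = 0 := by
  have e1 := h1.neg_mul_integral_eq_potential_sub h1b h1t
  have e2 := h2.neg_mul_integral_eq_potential_sub h2b h2t
  have hsum :
      c * ((∫ x, S.D (φ₁ x) * deriv φ₁ x ^ 2) + ∫ x, S.D (φ₂ x) * deriv φ₂ x ^ 2) = 0 := by
    linarith
  exact (mul_eq_zero.mp hsum).resolve_right (by positivity)

/-- If for some speed `c` there are both a nondecreasing front from `0` to `1` and a
nonincreasing front from `1` to `0`, then `c = 0`. -/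
theorem statement3 (S : NagumoSetup) (c : ℝ) (φ₁ φ₂ : ℝ → ℝ)
    (h1 : TWProfile S φ₁ c) (h1m : Monotone φ₁)
    (h1b : Tendsto φ₁ atBot (𝓝 0)) (h1t : Tendsto φ₁ atTop (𝓝 1))
    (h1p : 0 < ∫ x, S.D (φ₁ x) * (deriv φ₁ x) ^ 2)
    (h2 : TWProfile S φ₂ c) (h2m : Antitone φ₂)
    (h2b : Tendsto φ₂ atBot (𝓝 1)) (h2t : Tendsto φ₂ atTop (𝓝 0))
    (h2p : 0 < ∫ x, S.D (φ₂ x) * (deriv φ₂ x) ^ 2) :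
    c = 0 :=
  statement3_general S c φ₁ φ₂ h1 h1b h1t h1p h2 h2b h2t h2p
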